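/- Let H be a complex Hilbert space, E a set, and k : E → H a map whose image {k(q) : q ∈ E} has dense linear span in H. Let f ∈ H and let (p_n)_{n≥1} be a sequence in E satisfying the greedy optimality condition: for every n ≥ 0 and every q ∈ E, ‖f − P_{n+1} f‖ ≤ ‖f − Q_{n,q} f‖, where P_n denotes the orthogonal projection onto span{k(p_1), …, k(p_n)} (P_0 = 0) and Q_{n,q} denotes the orthogonal projection onto span{k(p_1), …, k(p_n), k(q)}. Then ‖f − P_n f‖ → 0 as n → ∞. -/

import Mathlib

/-!
Let `Mₙ` be the span of the first `n` selected atoms and `N` the closure of `⋃ Mₙ`; the residuals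
`dist(f, Mₙ)` decrease to `dist(f, N) = ‖r‖`, where `r = f - P_N f`. For a candidate `v = k q` and
a scalar `c`, `Mₙ + c v ⊆ span (insert v ...)`, so greediness gives
`dist(f, N) ≤ dist(f, Mₙ₊₁) ≤ dist(f - c v, Mₙ)`; letting `n → ∞`,
`‖r‖ ≤ dist(f - c v, N) ≤ ‖r - c v‖`.
Thus `0` is the best approximation of `r` in `ℂ ∙ v`, i.e. `r ⊥ k q` for every `q`, and density of
the span of the atoms forces `r = 0`.
-/

open Metric Filter Submodule Set
open scoped InnerProductSpace Topology

section MetricSpace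

variable {α : Type*} [PseudoMetricSpace α]

theorem Metric.tendsto_infDist_iUnion_of_monotone {s : ℕ → Set α} (hs : Monotone s)
    (h₀ : (s 0).Nonempty) (x : α) :
    Tendsto (fun n => infDist x (s n)) atTop (𝓝 (infDist x (⋃ n, s n))) := by
  have hne : ∀ n, (s n).Nonempty := fun n => h₀.mono (hs n.zero_le)
  have hanti : Antitone fun n => infDist x (s n) := fun m n hmn =>
    infDist_le_infDist_of_subset (hs hmn) (hne m)
  have hinf : ⨅ n, infDist x (s n) = infDist x (⋃ n, s n) := by
    refine le_antisymm ?_ <|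
      le_ciInf fun n => infDist_le_infDist_of_subset (subset_iUnion s n) (hne n)
    refine (le_infDist (h₀.mono (subset_iUnion s 0))).2 fun y hy => ?_
    obtain ⟨n, hn⟩ := mem_iUnion.1 hy
    exact (ciInf_le ⟨0, forall_mem_range.2 fun _ => infDist_nonneg⟩ n).trans
      (infDist_le_dist_of_mem hn)
  exact hinf ▸ tendsto_atTop_ciInf hanti ⟨0, forall_mem_range.2 fun _ => infDist_nonneg⟩

end MetricSpace

section Normed

variable {R E : Type*} [Ring R] [SeminormedAddCommGroup E] [Module R E]

theorem Submodule.tendsto_infDist_topologicalClosure_iSup [ContinuousConstSMul R E]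
    {M : ℕ → Submodule R E} (hM : Monotone M) (x : E) :
    Tendsto (fun n => infDist x (M n : Set E)) atTop
      (𝓝 (infDist x ((⨆ n, M n).topologicalClosure : Set E))) := by
  rw [topologicalClosure_coe, infDist_closure, coe_iSup_of_directed M hM.directed_le]
  exact tendsto_infDist_iUnion_of_monotone (fun _ _ h => hM h) ⟨0, zero_mem _⟩ x

theorem Submodule.infDist_span_insert_le (s : Set E) (v x : E) (c : R) :
    infDist x (span R (insert v s)) ≤ infDist (x - c • v) (span R s) := by
  refine le_of_forall_gt fun a ha => ?_
  obtain ⟨y, hy, hya⟩ := (infDist_lt_iff ⟨0, zero_mem _⟩).1 ha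
  have hmem : y + c • v ∈ span R (insert v s) :=
    add_mem (span_mono (subset_insert v s) hy) (smul_mem _ c (subset_span (mem_insert v s)))
  calc infDist x (span R (insert v s)) ≤ dist x (y + c • v) := infDist_le_dist_of_mem hmem
    _ = dist (x - c • v) y := by rw [dist_eq_norm, dist_eq_norm, sub_add_eq_sub_sub_swap]
    _ < a := hya

end Normed

section InnerProduct

variable {𝕜 E : Type*} [RCLike 𝕜] [NormedAddCommGroup E] [InnerProductSpace 𝕜 E]

theorem Submodule.infDist_eq_norm_sub_starProjection (K : Submodule 𝕜 E)
    [K.HasOrthogonalProjection] (x : E) :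
    infDist x K = ‖x - K.starProjection x‖ := by
  rw [infDist_eq_iInf, starProjection_minimal]
  simp_rw [dist_eq_norm]
  rfl

theorem Submodule.mem_orthogonal_of_forall_norm_le_norm_sub (K : Submodule 𝕜 E)
    [K.HasOrthogonalProjection] {x : E} (h : ∀ w ∈ K, ‖x‖ ≤ ‖x - w‖) : x ∈ Kᗮ := by
  have hpyth := K.norm_sq_eq_add_norm_sq_starProjection x
  rw [starProjection_orthogonal_val] at hpyth
  have hle := h _ (K.starProjection_apply_mem x)
  have : ‖K.starProjection x‖ = 0 := by nlinarith [norm_nonneg (K.starProjection x), norm_nonneg x]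
  exact (K.starProjection_apply_eq_zero_iff).1 (norm_eq_zero.1 this)

theorem Submodule.infDist_eq_zero_of_forall_infDist_le_infDist_sub_smul
    (N : Submodule 𝕜 E) [N.HasOrthogonalProjection] {ι : Type*} {k : ι → E}
    (hk : Dense (span 𝕜 (range k) : Set E)) {x : E}
    (h : ∀ i (c : 𝕜), infDist x N ≤ infDist (x - c • k i) N) :
    infDist x N = 0 := by
  set r := x - N.starProjection x
  have hr : ∀ i, r ∈ (𝕜 ∙ k i)ᗮ := fun i =>
    mem_orthogonal_of_forall_norm_le_norm_sub _ fun w hw => by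
      obtain ⟨c, rfl⟩ := mem_span_singleton.1 hw
      calc ‖r‖ = infDist x N := (N.infDist_eq_norm_sub_starProjection x).symm
        _ ≤ infDist (x - c • k i) N := h i c
        _ ≤ dist (x - c • k i) (N.starProjection x) := infDist_le_dist_of_mem (coe_mem _)
        _ = ‖r - c • k i‖ := by rw [dist_eq_norm, sub_right_comm]
  have hspan : span 𝕜 (range k) ≤ (𝕜 ∙ r)ᗮ := span_le.2 <| range_subset_iff.2 fun i =>
    mem_orthogonal_singleton_iff_inner_left.2 (mem_orthogonal_singleton_iff_inner_right.1 (hr i))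
  have hr0 : r = 0 := hk.eq_zero_of_inner_left 𝕜 fun v hv =>
    mem_orthogonal_singleton_iff_inner_right.1 (hspan hv)
  rw [N.infDist_eq_norm_sub_starProjection, norm_eq_zero]
  exact hr0

end InnerProduct

theorem stmt6 {H : Type*} [NormedAddCommGroup H] [InnerProductSpace ℂ H] [CompleteSpace H]
    {E : Type*} (k : E → H)
    (hdense : Dense (Submodule.span ℂ (Set.range k) : Set H))
    (f : H) (p : ℕ → E)
    (hgreedy : ∀ (n : ℕ) (q : E),
      Metric.infDist f
          (Submodule.span ℂ ((fun j => k (p j)) '' {j : ℕ | j < n + 1}) : Set H)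
        ≤ Metric.infDist f
          (Submodule.span ℂ (insert (k q) ((fun j => k (p j)) '' {j : ℕ | j < n})) : Set H)) :
    Filter.Tendsto
      (fun n : ℕ => Metric.infDist f
        (Submodule.span ℂ ((fun j => k (p j)) '' {j : ℕ | j < n}) : Set H))
      Filter.atTop (nhds 0) := by
  set M : ℕ → Submodule ℂ H := fun n => span ℂ ((fun j => k (p j)) '' {j : ℕ | j < n})
  have hM : Monotone M := fun m n hmn =>
    span_mono (image_mono fun j hj => lt_of_lt_of_le hj hmn)
  set N := (⨆ n, M n).topologicalClosure
  suffices infDist f N = 0 by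
    rw [← this]
    exact tendsto_infDist_topologicalClosure_iSup hM f
  refine N.infDist_eq_zero_of_forall_infDist_le_infDist_sub_smul hdense fun q c => ?_
  refine ge_of_tendsto' (tendsto_infDist_topologicalClosure_iSup hM _) fun n => ?_
  calc infDist f N ≤ infDist f (M (n + 1)) :=
        infDist_le_infDist_of_subset ((le_iSup M (n + 1)).trans (le_topologicalClosure _))
          ⟨0, zero_mem _⟩
    _ ≤ _ := hgreedy n q
    _ ≤ infDist (f - c • k q) (M n) := infDist_span_insert_le _ _ _ c
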